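/- Let L > 0, T > 0, b ∈ ℝ, h ≥ 0. Let g : ℝ → ℝ be continuously differentiable, let a₁, a₂ : ℝ × [0,L] → ℝ be continuously differentiable and bounded, let a₀ : ℝ × [0,L] → ℝ be continuous and bounded, and let f : [0,T] × ℝ × [0,L] → ℝ be continuous. Let u : [0,T] × ℝ × [0,L] → ℝ be infinitely differentiable, vanishing whenever |x| ≥ R for some R > 0, satisfying u(t,x,0) = u(t,x,L) = u_yy(t,x,0) = u_yy(t,x,L) = 0 for all t, x, and satisfying pointwise the equation u_t + b u_x + u_xxx + u_xyy + h(u_xxxx + u_yyyy) + (g(u))_x − (a₁ u_x)_x − (a₂ u_y)_y + a₀ u = f. Then for every t ∈ [0,T]: ∬_Σ u²(t) dx dy + 2h ∫₀^t ∬_Σ (u_xx² + u_yy²) dx dy dτ + 2 ∫₀^t ∬_Σ ( a₁ u_x² + a₂ u_y² + a₀ u² ) dx dy dτ = ∬_Σ u²(0) dx dy + 2 ∫₀^t ∬_Σ f u dx dy dτ. -/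

import Mathlib

/-!
Set `E(t) = ∬_Σ u(t)²`. Multiplying the equation by `2u`, the transport, dispersive, nonlinear
and `a₁`, `a₂` terms become the divergence `∂ₓP + ∂ᵧQ` of explicit fluxes `P = fluxX`,
`Q = fluxY`, up to the dissipation `2h(u_xx² + u_yy²)` and the damping `2(a₁u_x² + a₂u_y²)`; the
nonlinear term enters `P` through `Φ(u)` with `Φ(r) = ∫₀ʳ s g'(s) ds`. Since `u` vanishes for
large `|x|`, so does `P`, and `u = u_yy = 0` on `y = 0, L` makes `Q` vanish there, so both flux
terms integrate to zero over the strip. Differentiating `E` under the integral sign therefore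
gives `E' = 2∬fu - 2h∬(u_xx² + u_yy²) - 2∬(a₁u_x² + a₂u_y² + a₀u²)`, and the identity follows
by integrating in time.
-/

open MeasureTheory Real Set

noncomputable section

/-- Partial derivative in the time variable. -/
def Dt (u : ℝ → ℝ → ℝ → ℝ) (t x y : ℝ) : ℝ := deriv (fun s => u s x y) t

/-- Partial derivative in `x`. -/
def Dx (u : ℝ → ℝ → ℝ → ℝ) (t x y : ℝ) : ℝ := deriv (fun s => u t s y) x

/-- Partial derivative in `y`. -/
def Dy (u : ℝ → ℝ → ℝ → ℝ) (t x y : ℝ) : ℝ := deriv (fun s => u t x s) y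

open Topology

section PartialDerivatives

variable {w : ℝ → ℝ → ℝ → ℝ}

theorem hasDerivAt_Dt (hw : Differentiable ℝ ↿w) (t x y : ℝ) :
    HasDerivAt (fun s => w s x y) (Dt w t x y) t :=
  (hw.comp (differentiable_id.prodMk (differentiable_const (x, y)))).differentiableAt.hasDerivAt

theorem hasDerivAt_Dx (hw : Differentiable ℝ ↿w) (t x y : ℝ) :
    HasDerivAt (fun s => w t s y) (Dx w t x y) x :=
  (hw.comp ((differentiable_const t).prodMk
    (differentiable_id.prodMk (differentiable_const y)))).differentiableAt.hasDerivAt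

theorem hasDerivAt_Dy (hw : Differentiable ℝ ↿w) (t x y : ℝ) :
    HasDerivAt (fun s => w t x s) (Dy w t x y) y :=
  (hw.comp ((differentiable_const t).prodMk
    ((differentiable_const x).prodMk differentiable_id))).differentiableAt.hasDerivAt

theorem Dt_eq_fderiv (hw : Differentiable ℝ ↿w) (t x y : ℝ) :
    Dt w t x y = fderiv ℝ ↿w (t, x, y) (1, 0, 0) :=
  ((hw _).hasFDerivAt.comp_hasDerivAt t
    ((hasDerivAt_id t).prodMk (hasDerivAt_const t (x, y)))).deriv

theorem Dx_eq_fderiv (hw : Differentiable ℝ ↿w) (t x y : ℝ) :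
    Dx w t x y = fderiv ℝ ↿w (t, x, y) (0, 1, 0) :=
  ((hw _).hasFDerivAt.comp_hasDerivAt x ((hasDerivAt_const x t).prodMk
    ((hasDerivAt_id x).prodMk (hasDerivAt_const x y)))).deriv

theorem Dy_eq_fderiv (hw : Differentiable ℝ ↿w) (t x y : ℝ) :
    Dy w t x y = fderiv ℝ ↿w (t, x, y) (0, 0, 1) :=
  ((hw _).hasFDerivAt.comp_hasDerivAt y ((hasDerivAt_const y t).prodMk
    ((hasDerivAt_const y x).prodMk (hasDerivAt_id y)))).deriv

variable {m n : WithTop ℕ∞}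

theorem contDiff_Dt (hw : ContDiff ℝ n ↿w) (hmn : m + 1 ≤ n) : ContDiff ℝ m ↿(Dt w) := by
  have hd := (hw.of_le (le_add_self.trans hmn)).differentiable one_ne_zero
  rw [show ↿(Dt w) = fun p => fderiv ℝ ↿w p (1, 0, 0) from
    funext fun p => Dt_eq_fderiv hd p.1 p.2.1 p.2.2]
  exact (hw.fderiv_right hmn).clm_apply contDiff_const

theorem contDiff_Dx (hw : ContDiff ℝ n ↿w) (hmn : m + 1 ≤ n) : ContDiff ℝ m ↿(Dx w) := by
  have hd := (hw.of_le (le_add_self.trans hmn)).differentiable one_ne_zero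
  rw [show ↿(Dx w) = fun p => fderiv ℝ ↿w p (0, 1, 0) from
    funext fun p => Dx_eq_fderiv hd p.1 p.2.1 p.2.2]
  exact (hw.fderiv_right hmn).clm_apply contDiff_const

theorem contDiff_Dy (hw : ContDiff ℝ n ↿w) (hmn : m + 1 ≤ n) : ContDiff ℝ m ↿(Dy w) := by
  have hd := (hw.of_le (le_add_self.trans hmn)).differentiable one_ne_zero
  rw [show ↿(Dy w) = fun p => fderiv ℝ ↿w p (0, 0, 1) from
    funext fun p => Dy_eq_fderiv hd p.1 p.2.1 p.2.2]
  exact (hw.fderiv_right hmn).clm_apply contDiff_const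

theorem Dx_Dy_comm (hw : ContDiff ℝ 2 ↿w) : Dx (Dy w) = Dy (Dx w) := by
  have hd : Differentiable ℝ ↿w := hw.differentiable two_ne_zero
  have hdd : Differentiable ℝ (fderiv ℝ ↿w) := (hw.fderiv_right le_rfl).differentiable one_ne_zero
  have fderiv_partial : ∀ p v e : ℝ × ℝ × ℝ,
      fderiv ℝ (fun q => fderiv ℝ ↿w q e) p v = fderiv ℝ (fderiv ℝ ↿w) p v e := fun p v e => by
    rw [fderiv_clm_apply (hdd p) (differentiableAt_const e)]
    simp
  ext t x y
  rw [Dx_eq_fderiv ((contDiff_Dy hw le_rfl).differentiable one_ne_zero),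
    Dy_eq_fderiv ((contDiff_Dx hw le_rfl).differentiable one_ne_zero),
    show ↿(Dy w) = _ from funext fun q => Dy_eq_fderiv hd q.1 q.2.1 q.2.2,
    show ↿(Dx w) = _ from funext fun q => Dx_eq_fderiv hd q.1 q.2.1 q.2.2,
    fderiv_partial, fderiv_partial]
  exact hw.contDiffAt.isSymmSndFDerivAt (by simp) _ _

end PartialDerivatives

def VanishesForLargeX (S : ℝ) (w : ℝ → ℝ → ℝ → ℝ) : Prop :=
  ∀ t x y, S < |x| → w t x y = 0

section Vanishing

variable {S : ℝ} {w : ℝ → ℝ → ℝ → ℝ}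

theorem vanishesForLargeX_Dt (hw : VanishesForLargeX S w) : VanishesForLargeX S (Dt w) :=
  fun t x y hx => by simp [Dt, funext fun s => hw s x y hx]

theorem vanishesForLargeX_Dy (hw : VanishesForLargeX S w) : VanishesForLargeX S (Dy w) :=
  fun t x y hx => by simp [Dy, funext fun s => hw t x s hx]

theorem vanishesForLargeX_Dx (hw : VanishesForLargeX S w) : VanishesForLargeX S (Dx w) := by
  intro t x y hx
  have : (fun s => w t s y) =ᶠ[𝓝 x] fun _ => 0 :=
    (continuous_abs.tendsto x).eventually_const_lt hx |>.mono fun s hs => hw t s y hs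
  simp [Dx, this.deriv_eq]

theorem partials_eq_zero_of_vanishesForLargeX (hw : VanishesForLargeX S w) {t x y : ℝ}
    (hx : S < |x|) : w t x y = 0 ∧ Dx w t x y = 0 ∧ Dy w t x y = 0 ∧ Dx (Dx w) t x y = 0 ∧
      Dy (Dy w) t x y = 0 :=
  ⟨hw t x y hx, vanishesForLargeX_Dx hw t x y hx, vanishesForLargeX_Dy hw t x y hx,
    vanishesForLargeX_Dx (vanishesForLargeX_Dx hw) t x y hx,
    vanishesForLargeX_Dy (vanishesForLargeX_Dy hw) t x y hx⟩

theorem hasCompactSupport_of_vanishesForLargeX (hw : VanishesForLargeX S w) (t y : ℝ) :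
    HasCompactSupport fun x => w t x y :=
  .intro isCompact_Icc fun x hx => hw t x y (lt_of_not_ge fun h => hx (abs_le.1 h))

end Vanishing

abbrev stripMeasure (L : ℝ) : Measure (ℝ × ℝ) := volume.prod (volume.restrict (Ioo 0 L))

section Strip

variable {L S : ℝ} {w : ℝ → ℝ → ℝ → ℝ}

theorem ae_stripMeasure : ∀ᵐ p ∂stripMeasure L, p.2 ∈ Ioo 0 L :=
  Measure.quasiMeasurePreserving_snd.ae (ae_restrict_mem measurableSet_Ioo)

theorem ae_stripMeasure_eq_zero_of_notMem (hw : VanishesForLargeX S w) (t : ℝ) :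
    ∀ᵐ p ∂stripMeasure L, p ∉ Icc (-S) S ×ˢ Icc 0 L → w t p.1 p.2 = 0 := by
  filter_upwards [ae_stripMeasure] with p hp hpK
  exact hw t p.1 p.2 (lt_of_not_ge fun hx => hpK ⟨abs_le.1 hx, Ioo_subset_Icc_self hp⟩)

theorem integral_stripMeasure_eq_setIntegral (hw : VanishesForLargeX S w) (t : ℝ) :
    ∫ p, w t p.1 p.2 ∂stripMeasure L = ∫ p in Icc (-S) S ×ˢ Icc 0 L, w t p.1 p.2 ∂stripMeasure L :=
  (setIntegral_eq_integral_of_ae_compl_eq_zero (ae_stripMeasure_eq_zero_of_notMem hw t)).symm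

theorem integrable_stripMeasure (hc : Continuous ↿w) (hw : VanishesForLargeX S w) (t : ℝ) :
    Integrable (fun p : ℝ × ℝ => w t p.1 p.2) (stripMeasure L) :=
  ((hc.comp (Continuous.prodMk_right t)).continuousOn.integrableOn_compact
    (isCompact_Icc.prod isCompact_Icc)).integrable_of_ae_notMem_eq_zero
    (ae_stripMeasure_eq_zero_of_notMem hw t)

theorem integral_stripMeasure_eq_integral_integral (hc : Continuous ↿w)
    (hw : VanishesForLargeX S w) (t : ℝ) :
    ∫ p, w t p.1 p.2 ∂stripMeasure L = ∫ x, ∫ y in Ioo 0 L, w t x y :=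
  integral_prod _ (integrable_stripMeasure hc hw t)

theorem continuous_integral_integral_Ioo (hc : Continuous ↿w) (hw : VanishesForLargeX S w) :
    Continuous fun t => ∫ x, ∫ y in Ioo 0 L, w t x y := by
  simp_rw [← integral_stripMeasure_eq_integral_integral hc hw,
    integral_stripMeasure_eq_setIntegral hw]
  exact continuous_parametric_integral_of_continuous hc (isCompact_Icc.prod isCompact_Icc)

theorem hasDerivAt_integral_stripMeasure (hc : ContDiff ℝ 1 ↿w) (hw : VanishesForLargeX S w)
    (τ : ℝ) :
    HasDerivAt (fun t => ∫ p, w t p.1 p.2 ∂stripMeasure L)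
      (∫ p, Dt w τ p.1 p.2 ∂stripMeasure L) τ := by
  set K := Icc (-S) S ×ˢ Icc 0 L
  have hK : IsCompact K := isCompact_Icc.prod isCompact_Icc
  have : IsFiniteMeasure ((stripMeasure L).restrict K) :=
    isFiniteMeasure_restrict.2 hK.measure_lt_top.ne
  have hDt : Continuous ↿(Dt w) := (contDiff_Dt (m := 0) hc (by norm_num)).continuous
  -- A bound for `Dt w` on `[τ - 1, τ + 1] × K` dominates the difference quotients.
  obtain ⟨C, hC⟩ := ((isCompact_Icc (a := τ - 1) (b := τ + 1)).prod hK).exists_bound_of_continuousOn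
    hDt.continuousOn
  simp_rw [integral_stripMeasure_eq_setIntegral hw,
    integral_stripMeasure_eq_setIntegral (vanishesForLargeX_Dt hw)]
  refine (hasDerivAt_integral_of_dominated_loc_of_deriv_le (bound := fun _ => C)
    (Icc_mem_nhds (sub_one_lt τ) (lt_add_one τ))
    (.of_forall fun t => (hc.continuous.comp (Continuous.prodMk_right t)).aestronglyMeasurable)
    ((hc.continuous.comp (Continuous.prodMk_right τ)).continuousOn.integrableOn_compact hK)
    (hDt.comp (Continuous.prodMk_right τ)).aestronglyMeasurable
    ((ae_restrict_iff' hK.measurableSet).2 (.of_forall fun p hp t ht => hC (t, p) ⟨ht, hp⟩))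
    (integrable_const C)
    (.of_forall fun p t _ => hasDerivAt_Dt (hc.differentiable one_ne_zero) t p.1 p.2)).2

theorem integral_Dx_stripMeasure_eq_zero (hc : ContDiff ℝ 1 ↿w) (hw : VanishesForLargeX S w)
    (t : ℝ) : ∫ p, Dx w t p.1 p.2 ∂stripMeasure L = 0 := by
  have hDx : Continuous ↿(Dx w) := (contDiff_Dx (m := 0) hc (by norm_num)).continuous
  rw [integral_prod_symm _ (integrable_stripMeasure hDx (vanishesForLargeX_Dx hw) t)]
  refine integral_eq_zero_of_ae (.of_forall fun y => ?_)
  dsimp only [Pi.zero_apply]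
  exact integral_eq_zero_of_hasDerivAt_of_integrable
    (fun x => hasDerivAt_Dx (hc.differentiable one_ne_zero) t x y)
    ((hDx.comp (by fun_prop : Continuous fun x : ℝ => (t, x, y))).integrable_of_hasCompactSupport
      (hasCompactSupport_of_vanishesForLargeX (vanishesForLargeX_Dx hw) t y))
    ((hc.continuous.comp (by fun_prop : Continuous fun x : ℝ => (t, x, y)))
      |>.integrable_of_hasCompactSupport (hasCompactSupport_of_vanishesForLargeX hw t y))

theorem integral_Dy_stripMeasure_eq_zero (hL : 0 ≤ L) (hc : ContDiff ℝ 1 ↿w)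
    (hw : VanishesForLargeX S w) (t : ℝ) (h0 : ∀ x, w t x 0 = 0) (hL' : ∀ x, w t x L = 0) :
    ∫ p, Dy w t p.1 p.2 ∂stripMeasure L = 0 := by
  have hDy : Continuous ↿(Dy w) := (contDiff_Dy (m := 0) hc (by norm_num)).continuous
  rw [integral_prod _ (integrable_stripMeasure hDy (vanishesForLargeX_Dy hw) t)]
  refine integral_eq_zero_of_ae (.of_forall fun x => ?_)
  dsimp only [Pi.zero_apply]
  rw [← integral_Ioc_eq_integral_Ioo, ← intervalIntegral.integral_of_le hL,
    intervalIntegral.integral_eq_sub_of_hasDerivAt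
      (fun y _ => hasDerivAt_Dy (hc.differentiable one_ne_zero) t x y)
      ((hDy.comp (by fun_prop : Continuous fun y : ℝ => (t, x, y))).intervalIntegrable _ _),
    h0, hL', sub_self]

end Strip

def nonlinearPrimitive (g : ℝ → ℝ) (r : ℝ) : ℝ := ∫ s in 0..r, s * deriv g s

section NonlinearPrimitive

variable {g : ℝ → ℝ}

theorem hasDerivAt_nonlinearPrimitive (hg : Continuous (deriv g)) (r : ℝ) :
    HasDerivAt (nonlinearPrimitive g) (r * deriv g r) r :=
  ((continuous_id.mul hg).integral_hasStrictDerivAt 0 r).hasDerivAt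

theorem contDiff_nonlinearPrimitive (hg : Continuous (deriv g)) :
    ContDiff ℝ 1 (nonlinearPrimitive g) := by
  have hderiv : deriv (nonlinearPrimitive g) = fun r => r * deriv g r :=
    funext fun r => (hasDerivAt_nonlinearPrimitive hg r).deriv
  exact contDiff_one_iff_deriv.2 ⟨fun r => (hasDerivAt_nonlinearPrimitive hg r).differentiableAt,
    hderiv ▸ continuous_id.mul hg⟩

end NonlinearPrimitive

section Flux

variable (b h : ℝ) (g : ℝ → ℝ) (a₁ a₂ : ℝ → ℝ → ℝ) (u : ℝ → ℝ → ℝ → ℝ)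

def fluxX (t x y : ℝ) : ℝ :=
  b * u t x y ^ 2 + 2 * u t x y * Dx (Dx u) t x y - Dx u t x y ^ 2 - Dy u t x y ^ 2
    + 2 * h * (u t x y * Dx (Dx (Dx u)) t x y - Dx u t x y * Dx (Dx u) t x y)
    + 2 * nonlinearPrimitive g (u t x y) - 2 * u t x y * (a₁ x y * Dx u t x y)

def fluxY (t x y : ℝ) : ℝ :=
  2 * u t x y * Dx (Dy u) t x y
    + 2 * h * (u t x y * Dy (Dy (Dy u)) t x y - Dy u t x y * Dy (Dy u) t x y)
    - 2 * u t x y * (a₂ x y * Dy u t x y)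

variable {S : ℝ} {b h g a₁ a₂ u}

theorem contDiff_fluxX (hg : Continuous (deriv g))
    (ha₁ : ContDiff ℝ 1 fun p : ℝ × ℝ => a₁ p.1 p.2) (hu : ContDiff ℝ 4 ↿u) :
    ContDiff ℝ 1 ↿(fluxX b h g a₁ u) := by
  have hG := contDiff_nonlinearPrimitive hg
  have hux : ContDiff ℝ 3 ↿(Dx u) := contDiff_Dx hu (by norm_num)
  have huy : ContDiff ℝ 3 ↿(Dy u) := contDiff_Dy hu (by norm_num)
  have huxx : ContDiff ℝ 2 ↿(Dx (Dx u)) := contDiff_Dx hux (by norm_num)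
  have huxxx : ContDiff ℝ 1 ↿(Dx (Dx (Dx u))) := contDiff_Dx huxx (by norm_num)
  unfold fluxX
  fun_prop (disch := norm_num)

theorem contDiff_fluxY (ha₂ : ContDiff ℝ 1 fun p : ℝ × ℝ => a₂ p.1 p.2) (hu : ContDiff ℝ 4 ↿u) :
    ContDiff ℝ 1 ↿(fluxY h a₂ u) := by
  have huy : ContDiff ℝ 3 ↿(Dy u) := contDiff_Dy hu (by norm_num)
  have huxy : ContDiff ℝ 2 ↿(Dx (Dy u)) := contDiff_Dx huy (by norm_num)
  have huyy : ContDiff ℝ 2 ↿(Dy (Dy u)) := contDiff_Dy huy (by norm_num)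
  have huyyy : ContDiff ℝ 1 ↿(Dy (Dy (Dy u))) := contDiff_Dy huyy (by norm_num)
  unfold fluxY
  fun_prop (disch := norm_num)

theorem vanishesForLargeX_fluxX (hu : VanishesForLargeX S u) :
    VanishesForLargeX S (fluxX b h g a₁ u) := fun t x y hx => by
  simp [fluxX, nonlinearPrimitive, hu t x y hx, vanishesForLargeX_Dx hu t x y hx,
    vanishesForLargeX_Dy hu t x y hx]

theorem vanishesForLargeX_fluxY (hu : VanishesForLargeX S u) :
    VanishesForLargeX S (fluxY h a₂ u) := fun t x y hx => by
  simp [fluxY, hu t x y hx, vanishesForLargeX_Dy hu t x y hx]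

theorem fluxY_eq_zero {t x y : ℝ} (hu : u t x y = 0) (huyy : Dy (Dy u) t x y = 0) :
    fluxY h a₂ u t x y = 0 := by
  simp [fluxY, hu, huyy]

theorem Dx_fluxX (hg : Continuous (deriv g)) (ha₁ : ContDiff ℝ 1 fun p : ℝ × ℝ => a₁ p.1 p.2)
    (hu : ContDiff ℝ 4 ↿u) (t x y : ℝ) :
    Dx (fluxX b h g a₁ u) t x y
      = 2 * b * u t x y * Dx u t x y + 2 * u t x y * Dx (Dx (Dx u)) t x y
        - 2 * Dy u t x y * Dx (Dy u) t x y
        + 2 * h * (u t x y * Dx (Dx (Dx (Dx u))) t x y - Dx (Dx u) t x y ^ 2)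
        + 2 * u t x y * deriv g (u t x y) * Dx u t x y - 2 * a₁ x y * Dx u t x y ^ 2
        - 2 * u t x y * Dx (fun t x y => a₁ x y * Dx u t x y) t x y := by
  have hux : ContDiff ℝ 3 ↿(Dx u) := contDiff_Dx hu (by norm_num)
  have huy : ContDiff ℝ 3 ↿(Dy u) := contDiff_Dy hu (by norm_num)
  have huxx : ContDiff ℝ 2 ↿(Dx (Dx u)) := contDiff_Dx hux (by norm_num)
  have huxxx : ContDiff ℝ 1 ↿(Dx (Dx (Dx u))) := contDiff_Dx huxx (by norm_num)
  have hA : ContDiff ℝ 1 ↿(fun t x y => a₁ x y * Dx u t x y) := by fun_prop (disch := norm_num)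
  have d : ∀ {v : ℝ → ℝ → ℝ → ℝ} {n : WithTop ℕ∞}, ContDiff ℝ n ↿v → 1 ≤ n →
      HasDerivAt (fun s => v t s y) (Dx v t x y) x :=
    fun hv hn => hasDerivAt_Dx ((hv.of_le hn).differentiable one_ne_zero) t x y
  have du := d hu (by norm_num)
  have dux := d hux (by norm_num)
  have duxx := d huxx (by norm_num)
  have hflux := du.pow 2 |>.const_mul b |>.add (du.const_mul 2 |>.mul duxx)
    |>.sub (dux.pow 2) |>.sub (d huy (by norm_num) |>.pow 2)
    |>.add (du.mul (d huxxx le_rfl) |>.sub (dux.mul duxx) |>.const_mul (2 * h))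
    |>.add ((hasDerivAt_nonlinearPrimitive hg _).comp x du |>.const_mul 2)
    |>.sub (du.const_mul 2 |>.mul (d hA le_rfl))
  exact hflux.deriv.trans (by push_cast; ring)

theorem Dy_fluxY (ha₂ : ContDiff ℝ 1 fun p : ℝ × ℝ => a₂ p.1 p.2) (hu : ContDiff ℝ 4 ↿u)
    (t x y : ℝ) :
    Dy (fluxY h a₂ u) t x y
      = 2 * Dy u t x y * Dx (Dy u) t x y + 2 * u t x y * Dx (Dy (Dy u)) t x y
        + 2 * h * (u t x y * Dy (Dy (Dy (Dy u))) t x y - Dy (Dy u) t x y ^ 2)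
        - 2 * a₂ x y * Dy u t x y ^ 2
        - 2 * u t x y * Dy (fun t x y => a₂ x y * Dy u t x y) t x y := by
  have huy : ContDiff ℝ 3 ↿(Dy u) := contDiff_Dy hu (by norm_num)
  have huxy : ContDiff ℝ 2 ↿(Dx (Dy u)) := contDiff_Dx huy (by norm_num)
  have huyy : ContDiff ℝ 2 ↿(Dy (Dy u)) := contDiff_Dy huy (by norm_num)
  have huyyy : ContDiff ℝ 1 ↿(Dy (Dy (Dy u))) := contDiff_Dy huyy (by norm_num)
  have hA : ContDiff ℝ 1 ↿(fun t x y => a₂ x y * Dy u t x y) := by fun_prop (disch := norm_num)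
  have d : ∀ {v : ℝ → ℝ → ℝ → ℝ} {n : WithTop ℕ∞}, ContDiff ℝ n ↿v → 1 ≤ n →
      HasDerivAt (fun s => v t x s) (Dy v t x y) y :=
    fun hv hn => hasDerivAt_Dy ((hv.of_le hn).differentiable one_ne_zero) t x y
  have du := d hu (by norm_num)
  have duy := d huy (by norm_num)
  have hflux := du.const_mul 2 |>.mul (d huxy (by norm_num))
    |>.add (du.mul (d huyyy le_rfl) |>.sub (duy.mul (d huyy (by norm_num))) |>.const_mul (2 * h))
    |>.sub (du.const_mul 2 |>.mul (d hA le_rfl))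
  rw [Dx_Dy_comm (huy.of_le (by norm_num))]
  refine hflux.deriv.trans ?_
  ring

theorem integral_sub_divergence_flux {L : ℝ} {τ : ℝ} {D : ℝ × ℝ → ℝ} (hL : 0 ≤ L)
    (hg : Continuous (deriv g)) (ha₁ : ContDiff ℝ 1 fun p : ℝ × ℝ => a₁ p.1 p.2)
    (ha₂ : ContDiff ℝ 1 fun p : ℝ × ℝ => a₂ p.1 p.2) (hu : ContDiff ℝ 4 ↿u)
    (hu0 : VanishesForLargeX S u) (hbc0 : ∀ x, u τ x 0 = 0) (hbcL : ∀ x, u τ x L = 0)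
    (hbcyy0 : ∀ x, Dy (Dy u) τ x 0 = 0) (hbcyyL : ∀ x, Dy (Dy u) τ x L = 0)
    (hD : Integrable D (stripMeasure L)) :
    ∫ p, (D p - (Dx (fluxX b h g a₁ u) τ p.1 p.2 + Dy (fluxY h a₂ u) τ p.1 p.2)) ∂stripMeasure L
      = ∫ p, D p ∂stripMeasure L := by
  have cP := contDiff_fluxX (b := b) (h := h) hg ha₁ hu
  have cQ := contDiff_fluxY (h := h) ha₂ hu
  have vP := vanishesForLargeX_fluxX (b := b) (h := h) (g := g) (a₁ := a₁) hu0
  have vQ := vanishesForLargeX_fluxY (h := h) (a₂ := a₂) hu0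
  have iP := integrable_stripMeasure (L := L)
    (contDiff_Dx (m := 0) cP (by norm_num)).continuous (vanishesForLargeX_Dx vP) τ
  have iQ := integrable_stripMeasure (L := L)
    (contDiff_Dy (m := 0) cQ (by norm_num)).continuous (vanishesForLargeX_Dy vQ) τ
  rw [integral_sub hD, integral_add iP iQ, integral_Dx_stripMeasure_eq_zero cP vP,
    integral_Dy_stripMeasure_eq_zero hL cQ vQ τ (fun x => fluxY_eq_zero (hbc0 x) (hbcyy0 x))
      (fun x => fluxY_eq_zero (hbcL x) (hbcyyL x)), add_zero, sub_zero]
  exact iP.add iQ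

end Flux

section Energy

variable {L S b h : ℝ} {g : ℝ → ℝ} {a₀ a₁ a₂ : ℝ → ℝ → ℝ} {f u : ℝ → ℝ → ℝ → ℝ}

theorem local_energy_identity (hg : Continuous (deriv g))
    (ha₁ : ContDiff ℝ 1 fun p : ℝ × ℝ => a₁ p.1 p.2)
    (ha₂ : ContDiff ℝ 1 fun p : ℝ × ℝ => a₂ p.1 p.2)
    (hu : ContDiff ℝ 4 ↿u) {t x y : ℝ}
    (heq : Dt u t x y + b * Dx u t x y + Dx (Dx (Dx u)) t x y + Dx (Dy (Dy u)) t x y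
          + h * (Dx (Dx (Dx (Dx u))) t x y + Dy (Dy (Dy (Dy u))) t x y)
          + deriv g (u t x y) * Dx u t x y
          - Dx (fun t x y => a₁ x y * Dx u t x y) t x y
          - Dy (fun t x y => a₂ x y * Dy u t x y) t x y
          + a₀ x y * u t x y
        = f t x y) :
    Dt (fun t x y => u t x y ^ 2) t x y
      = 2 * (f t x y * u t x y) - 2 * h * (Dx (Dx u) t x y ^ 2 + Dy (Dy u) t x y ^ 2)
        - 2 * (a₁ x y * Dx u t x y ^ 2 + a₂ x y * Dy u t x y ^ 2 + a₀ x y * u t x y ^ 2)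
        - (Dx (fluxX b h g a₁ u) t x y + Dy (fluxY h a₂ u) t x y) := by
  have hsq : Dt (fun t x y => u t x y ^ 2) t x y = 2 * u t x y * Dt u t x y :=
    ((hasDerivAt_Dt (hu.differentiable (by norm_num)) t x y).pow 2).deriv.trans (by norm_num)
  rw [hsq, Dx_fluxX hg ha₁ hu, Dy_fluxY ha₂ hu]
  linear_combination 2 * u t x y * heq

theorem hasDerivAt_energy (hL : 0 ≤ L) (hg : Continuous (deriv g))
    (ha₁ : ContDiff ℝ 1 fun p : ℝ × ℝ => a₁ p.1 p.2)
    (ha₂ : ContDiff ℝ 1 fun p : ℝ × ℝ => a₂ p.1 p.2)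
    (ha₀ : Continuous fun p : ℝ × ℝ => a₀ p.1 p.2) (hf : Continuous ↿f)
    (hu : ContDiff ℝ 4 ↿u) (hu0 : VanishesForLargeX S u) {τ : ℝ}
    (hbc0 : ∀ x, u τ x 0 = 0) (hbcL : ∀ x, u τ x L = 0)
    (hbcyy0 : ∀ x, Dy (Dy u) τ x 0 = 0) (hbcyyL : ∀ x, Dy (Dy u) τ x L = 0)
    (heq : ∀ x, ∀ y ∈ Ioo 0 L,
      Dt u τ x y + b * Dx u τ x y + Dx (Dx (Dx u)) τ x y + Dx (Dy (Dy u)) τ x y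
          + h * (Dx (Dx (Dx (Dx u))) τ x y + Dy (Dy (Dy (Dy u))) τ x y)
          + deriv g (u τ x y) * Dx u τ x y
          - Dx (fun t x y => a₁ x y * Dx u t x y) τ x y
          - Dy (fun t x y => a₂ x y * Dy u t x y) τ x y
          + a₀ x y * u τ x y
        = f τ x y) :
    HasDerivAt (fun t => ∫ x, ∫ y in Ioo 0 L, u t x y ^ 2)
      (2 * (∫ x, ∫ y in Ioo 0 L, f τ x y * u τ x y)
        - 2 * h * (∫ x, ∫ y in Ioo 0 L, (Dx (Dx u) τ x y ^ 2 + Dy (Dy u) τ x y ^ 2))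
        - 2 * ∫ x, ∫ y in Ioo 0 L,
            (a₁ x y * Dx u τ x y ^ 2 + a₂ x y * Dy u τ x y ^ 2 + a₀ x y * u τ x y ^ 2)) τ := by
  have hux : ContDiff ℝ 3 ↿(Dx u) := contDiff_Dx hu (by norm_num)
  have huy : ContDiff ℝ 3 ↿(Dy u) := contDiff_Dy hu (by norm_num)
  have huxx : ContDiff ℝ 2 ↿(Dx (Dx u)) := contDiff_Dx hux (by norm_num)
  have huyy : ContDiff ℝ 2 ↿(Dy (Dy u)) := contDiff_Dy huy (by norm_num)
  have cE : ContDiff ℝ 1 ↿(fun t x y => u t x y ^ 2) := by fun_prop (disch := norm_num)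
  have cF : Continuous ↿(fun t x y => f t x y * u t x y) := by fun_prop (disch := norm_num)
  have cA : Continuous ↿(fun t x y => Dx (Dx u) t x y ^ 2 + Dy (Dy u) t x y ^ 2) := by
    fun_prop (disch := norm_num)
  have cB : Continuous ↿(fun t x y =>
      a₁ x y * Dx u t x y ^ 2 + a₂ x y * Dy u t x y ^ 2 + a₀ x y * u t x y ^ 2) := by
    fun_prop (disch := norm_num)
  have vE : VanishesForLargeX S fun t x y => u t x y ^ 2 := fun t x y hx => by
    simp [partials_eq_zero_of_vanishesForLargeX hu0 hx]
  have vF : VanishesForLargeX S fun t x y => f t x y * u t x y := fun t x y hx => by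
    simp [partials_eq_zero_of_vanishesForLargeX hu0 hx]
  have vA : VanishesForLargeX S fun t x y => Dx (Dx u) t x y ^ 2 + Dy (Dy u) t x y ^ 2 :=
    fun t x y hx => by simp [partials_eq_zero_of_vanishesForLargeX hu0 hx]
  have vB : VanishesForLargeX S fun t x y =>
      a₁ x y * Dx u t x y ^ 2 + a₂ x y * Dy u t x y ^ 2 + a₀ x y * u t x y ^ 2 :=
    fun t x y hx => by simp [partials_eq_zero_of_vanishesForLargeX hu0 hx]
  have iF := integrable_stripMeasure (L := L) cF vF τ
  have iA := integrable_stripMeasure (L := L) cA vA τ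
  have iB := integrable_stripMeasure (L := L) cB vB τ
  have hE := hasDerivAt_integral_stripMeasure (L := L) cE vE τ
  rw [integral_congr_ae (ae_stripMeasure.mono fun p hp =>
      local_energy_identity hg ha₁ ha₂ hu (heq p.1 p.2 hp)),
    integral_sub_divergence_flux hL hg ha₁ ha₂ hu hu0 hbc0 hbcL hbcyy0 hbcyyL,
    integral_sub, integral_sub, integral_const_mul, integral_const_mul, integral_const_mul,
    integral_stripMeasure_eq_integral_integral cF vF,
    integral_stripMeasure_eq_integral_integral cA vA,
    integral_stripMeasure_eq_integral_integral cB vB] at hE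
  · simpa only [integral_stripMeasure_eq_integral_integral cE.continuous vE] using hE
  all_goals fun_prop

end Energy

theorem energy_identity_of_hasDerivAt {E F A B : ℝ → ℝ} {h t : ℝ} (ht : 0 ≤ t)
    (hF : Continuous F) (hA : Continuous A) (hB : Continuous B)
    (hE : ∀ τ ∈ Icc 0 t, HasDerivAt E (2 * F τ - 2 * h * A τ - 2 * B τ) τ) :
    E t + 2 * h * (∫ τ in 0..t, A τ) + 2 * (∫ τ in 0..t, B τ) = E 0 + 2 * ∫ τ in 0..t, F τ := by
  have hD : Continuous fun τ => 2 * F τ - 2 * h * A τ - 2 * B τ := by fun_prop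
  have hFTC := intervalIntegral.integral_eq_sub_of_hasDerivAt
    (fun τ hτ => hE τ (uIcc_of_le ht ▸ hτ)) (hD.intervalIntegrable 0 t)
  rw [intervalIntegral.integral_sub, intervalIntegral.integral_sub,
    intervalIntegral.integral_const_mul, intervalIntegral.integral_const_mul,
    intervalIntegral.integral_const_mul] at hFTC
  · linarith
  all_goals exact Continuous.intervalIntegrable (by fun_prop) 0 t

theorem regularized_energy_identity_general (L T b h : ℝ) (hL : 0 < L)
    (g : ℝ → ℝ) (hg : ContDiff ℝ 1 g)
    (a₁ a₂ : ℝ → ℝ → ℝ) (a₀ : ℝ → ℝ → ℝ) (f : ℝ → ℝ → ℝ → ℝ)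
    (ha₁ : ContDiff ℝ 1 (fun p : ℝ × ℝ => a₁ p.1 p.2))
    (ha₂ : ContDiff ℝ 1 (fun p : ℝ × ℝ => a₂ p.1 p.2))
    (ha₀ : Continuous (fun p : ℝ × ℝ => a₀ p.1 p.2))
    (hf : Continuous (fun p : ℝ × ℝ × ℝ => f p.1 p.2.1 p.2.2))
    (u : ℝ → ℝ → ℝ → ℝ)
    (hu : ContDiff ℝ (⊤ : ℕ∞) (fun p : ℝ × ℝ × ℝ => u p.1 p.2.1 p.2.2))
    (hsupp : ∃ R > 0, ∀ t x y : ℝ, R ≤ |x| → u t x y = 0)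
    (hbc0 : ∀ t x : ℝ, u t x 0 = 0) (hbcL : ∀ t x : ℝ, u t x L = 0)
    (hbcyy0 : ∀ t x : ℝ, Dy (Dy u) t x 0 = 0) (hbcyyL : ∀ t x : ℝ, Dy (Dy u) t x L = 0)
    (heq : ∀ t ∈ Icc (0:ℝ) T, ∀ x : ℝ, ∀ y ∈ Icc (0:ℝ) L,
      Dt u t x y + b * Dx u t x y + Dx (Dx (Dx u)) t x y + Dx (Dy (Dy u)) t x y
          + h * (Dx (Dx (Dx (Dx u))) t x y + Dy (Dy (Dy (Dy u))) t x y)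
          + deriv g (u t x y) * Dx u t x y
          - Dx (fun t x y => a₁ x y * Dx u t x y) t x y
          - Dy (fun t x y => a₂ x y * Dy u t x y) t x y
          + a₀ x y * u t x y
        = f t x y) :
    ∀ t ∈ Icc (0:ℝ) T,
      (∫ x : ℝ, ∫ y in Ioo (0:ℝ) L, (u t x y) ^ 2)
        + 2 * h * (∫ τ in (0:ℝ)..t, ∫ x : ℝ, ∫ y in Ioo (0:ℝ) L,
            ((Dx (Dx u) τ x y) ^ 2 + (Dy (Dy u) τ x y) ^ 2))
        + 2 * (∫ τ in (0:ℝ)..t, ∫ x : ℝ, ∫ y in Ioo (0:ℝ) L,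
            (a₁ x y * (Dx u τ x y) ^ 2 + a₂ x y * (Dy u τ x y) ^ 2
              + a₀ x y * (u τ x y) ^ 2))
      = (∫ x : ℝ, ∫ y in Ioo (0:ℝ) L, (u 0 x y) ^ 2)
        + 2 * ∫ τ in (0:ℝ)..t, ∫ x : ℝ, ∫ y in Ioo (0:ℝ) L, f τ x y * u τ x y := by
  obtain ⟨R, -, hR⟩ := hsupp
  have hu0 : VanishesForLargeX R u := fun τ x y hx => hR τ x y hx.le
  have hu4 : ContDiff ℝ 4 ↿u := hu.of_le (WithTop.coe_le_coe.2 le_top)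
  have hux : ContDiff ℝ 3 ↿(Dx u) := contDiff_Dx hu4 (by norm_num)
  have huy : ContDiff ℝ 3 ↿(Dy u) := contDiff_Dy hu4 (by norm_num)
  have huxx : ContDiff ℝ 2 ↿(Dx (Dx u)) := contDiff_Dx hux (by norm_num)
  have huyy : ContDiff ℝ 2 ↿(Dy (Dy u)) := contDiff_Dy huy (by norm_num)
  intro t ht
  refine energy_identity_of_hasDerivAt ht.1 ?_ ?_ ?_ fun τ hτ =>
    hasDerivAt_energy hL.le (hg.continuous_deriv le_rfl) ha₁ ha₂ ha₀ hf hu4 hu0 (hbc0 τ) (hbcL τ)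
      (hbcyy0 τ) (hbcyyL τ) fun x y hy =>
        heq τ ⟨hτ.1, hτ.2.trans ht.2⟩ x y (Ioo_subset_Icc_self hy)
  all_goals
    refine continuous_integral_integral_Ioo (S := R) (by fun_prop (disch := norm_num)) ?_
    intro τ x y hx
    simp [partials_eq_zero_of_vanishesForLargeX hu0 hx]

/-- `L²` energy identity for smooth solutions of the regularized generalized
Zakharov–Kuznetsov equation with damping coefficients `a₀, a₁, a₂`. -/
theorem regularized_energy_identity (L T b h : ℝ) (hL : 0 < L) (hT : 0 < T) (hh : 0 ≤ h)
    (g : ℝ → ℝ) (hg : ContDiff ℝ 1 g)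
    (a₁ a₂ : ℝ → ℝ → ℝ) (a₀ : ℝ → ℝ → ℝ) (f : ℝ → ℝ → ℝ → ℝ)
    (ha₁ : ContDiff ℝ 1 (fun p : ℝ × ℝ => a₁ p.1 p.2))
    (ha₂ : ContDiff ℝ 1 (fun p : ℝ × ℝ => a₂ p.1 p.2))
    (ha₀ : Continuous (fun p : ℝ × ℝ => a₀ p.1 p.2))
    (ha₁b : ∃ M : ℝ, ∀ x y : ℝ, |a₁ x y| ≤ M)
    (ha₂b : ∃ M : ℝ, ∀ x y : ℝ, |a₂ x y| ≤ M)
    (ha₀b : ∃ M : ℝ, ∀ x y : ℝ, |a₀ x y| ≤ M)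
    (hf : Continuous (fun p : ℝ × ℝ × ℝ => f p.1 p.2.1 p.2.2))
    (u : ℝ → ℝ → ℝ → ℝ)
    (hu : ContDiff ℝ (⊤ : ℕ∞) (fun p : ℝ × ℝ × ℝ => u p.1 p.2.1 p.2.2))
    (hsupp : ∃ R > 0, ∀ t x y : ℝ, R ≤ |x| → u t x y = 0)
    (hbc0 : ∀ t x : ℝ, u t x 0 = 0) (hbcL : ∀ t x : ℝ, u t x L = 0)
    (hbcyy0 : ∀ t x : ℝ, Dy (Dy u) t x 0 = 0) (hbcyyL : ∀ t x : ℝ, Dy (Dy u) t x L = 0)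
    (heq : ∀ t ∈ Icc (0:ℝ) T, ∀ x : ℝ, ∀ y ∈ Icc (0:ℝ) L,
      Dt u t x y + b * Dx u t x y + Dx (Dx (Dx u)) t x y + Dx (Dy (Dy u)) t x y
          + h * (Dx (Dx (Dx (Dx u))) t x y + Dy (Dy (Dy (Dy u))) t x y)
          + deriv g (u t x y) * Dx u t x y
          - Dx (fun t x y => a₁ x y * Dx u t x y) t x y
          - Dy (fun t x y => a₂ x y * Dy u t x y) t x y
          + a₀ x y * u t x y
        = f t x y) :
    ∀ t ∈ Icc (0:ℝ) T,
      (∫ x : ℝ, ∫ y in Ioo (0:ℝ) L, (u t x y) ^ 2)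
        + 2 * h * (∫ τ in (0:ℝ)..t, ∫ x : ℝ, ∫ y in Ioo (0:ℝ) L,
            ((Dx (Dx u) τ x y) ^ 2 + (Dy (Dy u) τ x y) ^ 2))
        + 2 * (∫ τ in (0:ℝ)..t, ∫ x : ℝ, ∫ y in Ioo (0:ℝ) L,
            (a₁ x y * (Dx u τ x y) ^ 2 + a₂ x y * (Dy u τ x y) ^ 2
              + a₀ x y * (u τ x y) ^ 2))
      = (∫ x : ℝ, ∫ y in Ioo (0:ℝ) L, (u 0 x y) ^ 2)
        + 2 * ∫ τ in (0:ℝ)..t, ∫ x : ℝ, ∫ y in Ioo (0:ℝ) L, f τ x y * u τ x y :=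
  regularized_energy_identity_general L T b h hL g hg a₁ a₂ a₀ f ha₁ ha₂ ha₀ hf u hu hsupp hbc0 hbcL
    hbcyy0 hbcyyL heq
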